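/- In the two-player interconnected contest with Tullock contest success function with parameter γ ∈ (0,1], in every Nash equilibrium (e_1, e_2) the total effort of each player i ∈ {1,2} satisfies Σ_{k∈B} e_i^k = (γ/c_i) Σ_{k∈B} p_1^k p_2^k v^k, where p_i^k are the equilibrium winning probabilities. -/

import Mathlib

open Finset Matrix

/-- Effective effort of a player with spillover matrix `ρ` and effort vector `e`
at battlefield `k`: `y^k = e^k + ∑_{l ≠ k} ρ^{l,k} e^l`. -/
noncomputable def effY {m : ℕ} (ρ : Matrix (Fin m) (Fin m) ℝ) (e : Fin m → ℝ)
    (k : Fin m) : ℝ :=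
  e k + ∑ l ∈ Finset.univ.erase k, ρ l k * e l

/-- Tullock contest success function with parameter `γ`.  When both effective
efforts are `0` this gives `0/0 = 0`, matching the convention. -/
noncomputable def tullock (γ y₁ y₂ : ℝ) : ℝ :=
  y₁ ^ γ / (y₁ ^ γ + y₂ ^ γ)

/-- Payoff of player `i` in the interconnected contest. -/
noncomputable def payoff {m : ℕ} (γ : ℝ) (v : Fin m → ℝ) (c : Fin 2 → ℝ)
    (ρ : Fin 2 → Matrix (Fin m) (Fin m) ℝ) (e : Fin 2 → Fin m → ℝ) (i : Fin 2) : ℝ :=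
  (∑ k, v k * tullock γ (effY (ρ i) (e i) k) (effY (ρ (1 - i)) (e (1 - i)) k))
    - c i * ∑ k, e i k

/-- Pure strategy Nash equilibrium of the interconnected contest:
nonnegative efforts, and no profitable deviation to any nonnegative effort vector. -/
def IsNashEq {m : ℕ} (γ : ℝ) (v : Fin m → ℝ) (c : Fin 2 → ℝ)
    (ρ : Fin 2 → Matrix (Fin m) (Fin m) ℝ) (e : Fin 2 → Fin m → ℝ) : Prop :=
  (∀ i k, 0 ≤ e i k) ∧
  ∀ (i : Fin 2) (e' : Fin m → ℝ), (∀ k, 0 ≤ e' k) →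
    payoff γ v c ρ (Function.update e i e') i ≤ payoff γ v c ρ e i

/-- Winning probability of player `i` at battlefield `k` under profile `e`. -/
noncomputable def eqProb {m : ℕ} (γ : ℝ) (ρ : Fin 2 → Matrix (Fin m) (Fin m) ℝ)
    (e : Fin 2 → Fin m → ℝ) (i : Fin 2) (k : Fin m) : ℝ :=
  tullock γ (effY (ρ i) (e i) k) (effY (ρ (1 - i)) (e (1 - i)) k)

open Filter Topology

/-!
Player `i` may deviate to `t • e i` for any `t ≥ 0`. Effective effort is linear in own effort,
so this deviation multiplies every `(y_i^k)^γ` by `t^γ`, and the payoff along the ray is a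
differentiable function of `t` with derivative `Σ_k v^k γ p_1^k p_2^k - c_i Σ_k e_i^k` at `t = 1`.
Since `t = 1` is an interior maximum of this one-variable function even when `e i` lies on the
boundary of the strategy set, the derivative vanishes, which is the formula.
-/

lemma effY_smul {m : ℕ} (ρ : Matrix (Fin m) (Fin m) ℝ) (t : ℝ) (e : Fin m → ℝ) (k : Fin m) :
    effY ρ (t • e) k = t * effY ρ e k := by
  simp only [effY, Pi.smul_apply, smul_eq_mul, mul_add, Finset.mul_sum, mul_left_comm]

lemma effY_nonneg {m : ℕ} {ρ : Matrix (Fin m) (Fin m) ℝ} {e : Fin m → ℝ}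
    (hρ : ∀ k l, 0 ≤ ρ k l) (he : ∀ k, 0 ≤ e k) (k : Fin m) : 0 ≤ effY ρ e k :=
  add_nonneg (he k) (Finset.sum_nonneg fun l _ => mul_nonneg (hρ l k) (he l))

lemma hasDerivAt_rpow_mul_div_rpow_mul_add {γ a b : ℝ} (ha : 0 ≤ a) (hb : 0 ≤ b) :
    HasDerivAt (fun t : ℝ => t ^ γ * a / (t ^ γ * a + b)) (γ * (a / (a + b)) * (b / (b + a))) 1 := by
  rcases ha.eq_or_lt with rfl | ha
  · simpa using hasDerivAt_const (1 : ℝ) (0 : ℝ)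
  have hpow : HasDerivAt (fun t : ℝ => t ^ γ * a) (γ * a) 1 := by
    simpa using (Real.hasDerivAt_rpow_const (x := 1) (p := γ) (Or.inl one_ne_zero)).mul_const a
  have hab : a + b ≠ 0 := (add_pos_of_pos_of_nonneg ha hb).ne'
  refine (hpow.div (hpow.add_const b) (by simpa using hab)).congr_deriv ?_
  rw [Real.one_rpow, one_mul]
  field_simp
  ring

lemma hasDerivAt_tullock_mul_left {γ y₁ y₂ : ℝ} (hy₁ : 0 ≤ y₁) (hy₂ : 0 ≤ y₂) :
    HasDerivAt (fun t => tullock γ (t * y₁) y₂) (γ * tullock γ y₁ y₂ * tullock γ y₂ y₁) 1 := by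
  have hshare := hasDerivAt_rpow_mul_div_rpow_mul_add (γ := γ)
    (Real.rpow_nonneg hy₁ γ) (Real.rpow_nonneg hy₂ γ)
  refine hshare.congr_of_eventuallyEq ?_
  filter_upwards [Ioi_mem_nhds one_pos] with t ht
  rw [tullock, Real.mul_rpow (le_of_lt ht) hy₁]

section Contest

variable {m : ℕ} {γ : ℝ} {v : Fin m → ℝ} {c : Fin 2 → ℝ}
  {ρ : Fin 2 → Matrix (Fin m) (Fin m) ℝ} {e : Fin 2 → Fin m → ℝ}

lemma Fin.two_sub_ne_self (i : Fin 2) : 1 - i ≠ i := by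
  fin_cases i <;> decide

lemma eqProb_mul_eqProb_one_sub (i : Fin 2) (k : Fin m) :
    eqProb γ ρ e i k * eqProb γ ρ e (1 - i) k = eqProb γ ρ e 0 k * eqProb γ ρ e 1 k := by
  fin_cases i
  · rfl
  · exact mul_comm _ _

lemma payoff_update_smul (i : Fin 2) (t : ℝ) :
    payoff γ v c ρ (Function.update e i (t • e i)) i =
      ∑ k, v k * tullock γ (t * effY (ρ i) (e i) k) (effY (ρ (1 - i)) (e (1 - i)) k)
        - c i * (t * ∑ k, e i k) := by
  simp only [payoff, Function.update_self, Function.update_of_ne (Fin.two_sub_ne_self i),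
    effY_smul, Pi.smul_apply, smul_eq_mul, Finset.mul_sum]

lemma hasDerivAt_payoff_update_smul (hρ : ∀ j k l, 0 ≤ ρ j k l) (he : ∀ j k, 0 ≤ e j k)
    (i : Fin 2) :
    HasDerivAt (fun t : ℝ => payoff γ v c ρ (Function.update e i (t • e i)) i)
      (∑ k, v k * (γ * eqProb γ ρ e i k * eqProb γ ρ e (1 - i) k) - c i * ∑ k, e i k) 1 := by
  simp only [payoff_update_smul, eqProb, sub_sub_cancel]
  have hshares := HasDerivAt.fun_sum (u := Finset.univ) fun k _ =>
    (hasDerivAt_tullock_mul_left (γ := γ) (effY_nonneg (hρ i) (he i) k)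
      (effY_nonneg (hρ (1 - i)) (he (1 - i)) k)).const_mul (v k)
  simpa using hshares.fun_sub (((hasDerivAt_id (1 : ℝ)).mul_const (∑ k, e i k)).const_mul (c i))

theorem IsNashEq.cost_mul_total_effort_eq (hρ : ∀ j k l, 0 ≤ ρ j k l)
    (hNE : IsNashEq γ v c ρ e) (i : Fin 2) :
    c i * ∑ k, e i k = γ * ∑ k, eqProb γ ρ e 0 k * eqProb γ ρ e 1 k * v k := by
  obtain ⟨he, hdev⟩ := hNE
  have hmax : IsLocalMax (fun t : ℝ => payoff γ v c ρ (Function.update e i (t • e i)) i) 1 := by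
    filter_upwards [Ioi_mem_nhds one_pos] with t ht
    rw [one_smul, Function.update_eq_self]
    exact hdev i _ fun k => mul_nonneg (le_of_lt ht) (he i k)
  have hfoc := hmax.hasDerivAt_eq_zero (hasDerivAt_payoff_update_smul hρ he i)
  rw [sub_eq_zero] at hfoc
  rw [← hfoc, Finset.mul_sum]
  refine Finset.sum_congr rfl fun k _ => ?_
  rw [mul_assoc γ, eqProb_mul_eqProb_one_sub]
  ring

end Contest

theorem equilibrium_total_effort_general (m : ℕ) (γ : ℝ)
    (v : Fin m → ℝ)
    (c : Fin 2 → ℝ) (hc : ∀ i, 0 < c i)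
    (ρ : Fin 2 → Matrix (Fin m) (Fin m) ℝ)
    (hρ : ∀ i k l, 0 ≤ ρ i k l)
    (e : Fin 2 → Fin m → ℝ) (he : IsNashEq γ v c ρ e) (i : Fin 2) :
    ∑ k, e i k = (γ / c i) * ∑ k, eqProb γ ρ e 0 k * eqProb γ ρ e 1 k * v k := by
  rw [div_mul_eq_mul_div, eq_div_iff (hc i).ne', mul_comm]
  exact he.cost_mul_total_effort_eq hρ i

/-- equilibrium total effort formula. -/
theorem equilibrium_total_effort (m : ℕ) (γ : ℝ) (hγ0 : 0 < γ) (hγ1 : γ ≤ 1)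
    (v : Fin m → ℝ) (hv : ∀ k, 0 < v k)
    (c : Fin 2 → ℝ) (hc : ∀ i, 0 < c i)
    (ρ : Fin 2 → Matrix (Fin m) (Fin m) ℝ)
    (hρ : ∀ i k l, 0 ≤ ρ i k l) (hρd : ∀ i k, ρ i k k = 0)
    (e : Fin 2 → Fin m → ℝ) (he : IsNashEq γ v c ρ e) (i : Fin 2) :
    ∑ k, e i k = (γ / c i) * ∑ k, eqProb γ ρ e 0 k * eqProb γ ρ e 1 k * v k :=
  equilibrium_total_effort_general m γ v c hc ρ hρ e he i
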